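/- Lebourg mean value theorem: Let X be a Banach space and φ: X → ℝ locally Lipschitz. For any x, y ∈ X there exist t ∈ (0,1) and x* ∈ ∂φ(x + t(y − x)) such that φ(y) − φ(x) = ⟨x*, y − x⟩. -/

import Mathlib

/-!
Along the segment, `ψ t = φ (x + t • (y - x)) - t * (φ y - φ x)` takes the same value at `0`
and `1`, so it has a local extremum at some `t₀ ∈ (0, 1)`. Comparing `ψ` near `t₀` with the
difference quotients of `φ` at `z = x + t₀ • (y - x)` gives `φ y - φ x ≤ φ°(z; y - x)` and
`φ x - φ y ≤ φ°(z; x - y)`. Since `φ` is Lipschitz near `z`, the Clarke derivative `φ°(z; ·)`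
is sublinear and bounded by `K * ‖·‖`, so Hahn–Banach extends `s • (y - x) ↦ s * (φ y - φ x)`
to a continuous functional dominated by `φ°(z; ·)`, i.e. an element of `∂φ(z)`.
-/

open Filter Topology

noncomputable def clarkeDeriv {X : Type*} [NormedAddCommGroup X] [NormedSpace ℝ X]
    (φ : X → ℝ) (x h : X) : ℝ :=
  Filter.limsup (fun p : X × ℝ => (φ (p.1 + p.2 • h) - φ p.1) / p.2)
    ((nhds x) ×ˢ (nhdsWithin 0 (Set.Ioi (0 : ℝ))))


def clarkeSubdiff {X : Type*} [NormedAddCommGroup X] [NormedSpace ℝ X]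
    (φ : X → ℝ) (x : X) : Set (X →L[ℝ] ℝ) :=
  {xs | ∀ h, xs h ≤ clarkeDeriv φ x h}

open scoped NNReal

section ClarkeFilter

variable {X : Type*} [TopologicalSpace X]

def clarkeFilter (z : X) : Filter (X × ℝ) := 𝓝 z ×ˢ 𝓝[>] 0

instance (z : X) : (clarkeFilter z).NeBot := by
  unfold clarkeFilter; infer_instance

lemma clarkeFilter_le_nhds (z : X) : clarkeFilter z ≤ 𝓝 (z, 0) := by
  rw [nhds_prod_eq]
  exact prod_mono le_rfl nhdsWithin_le_nhds

lemma eventually_pos_snd_clarkeFilter (z : X) : ∀ᶠ p in clarkeFilter z, 0 < p.2 :=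
  tendsto_snd.eventually self_mem_nhdsWithin

lemma tendsto_mul_snd_clarkeFilter (z : X) {c : ℝ} (hc : 0 < c) :
    Tendsto (fun p : X × ℝ => (p.1, c * p.2)) (clarkeFilter z) (clarkeFilter z) :=
  tendsto_fst.prodMk ((tendsto_iff_comap.2 (comap_mulLeft_nhdsGT_zero hc).ge).comp tendsto_snd)

end ClarkeFilter

section HahnBanach

variable {X : Type*} [NormedAddCommGroup X] [NormedSpace ℝ X]

theorem exists_continuousLinearMap_le_sublinear_apply_eq {p : X → ℝ} {K : ℝ}
    (hp_smul : ∀ c : ℝ, 0 < c → ∀ h, p (c • h) = c * p h)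
    (hp_add : ∀ h₁ h₂, p (h₁ + h₂) ≤ p h₁ + p h₂) (hp_le : ∀ h, p h ≤ K * ‖h‖)
    {v : X} {a : ℝ} (hv : a ≤ p v) (hnv : -a ≤ p (-v)) :
    ∃ f : X →L[ℝ] ℝ, (∀ h, f h ≤ p h) ∧ f v = a := by
  have hp_zero : p 0 = 0 := by
    have := hp_smul 2 two_pos 0
    rw [smul_zero] at this
    linarith
  have hspan : ∀ c : ℝ, c * a ≤ p (c • v) := by
    intro c
    rcases lt_trichotomy c 0 with hc | rfl | hc
    · rw [show c • v = (-c) • -v by rw [smul_neg, neg_smul, neg_neg], hp_smul _ (neg_pos.2 hc)]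
      nlinarith
    · simp [hp_zero]
    · rw [hp_smul c hc]
      exact mul_le_mul_of_nonneg_left hv hc.le
  have hker : ∀ c : ℝ, c • v = 0 → (RingHom.id ℝ) c • a = 0 := by
    intro c hc
    have h₁ := hspan c
    have h₂ := hspan (-c)
    rw [hc, hp_zero] at h₁
    rw [neg_smul, hc, neg_zero, hp_zero] at h₂
    simp only [RingHom.id_apply, smul_eq_mul]
    linarith
  obtain ⟨g, hgf, hgp⟩ := exists_extension_of_le_sublinear (LinearPMap.mkSpanSingleton' v a hker) p
    hp_smul hp_add fun ⟨w, hw⟩ => by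
      obtain ⟨c, rfl⟩ := Submodule.mem_span_singleton.1 hw
      rw [LinearPMap.mkSpanSingleton'_apply]
      exact hspan c
  have hg_bound : ∀ h, ‖g h‖ ≤ K * ‖h‖ := fun h => by
    have := (hgp (-h)).trans (hp_le (-h))
    rw [map_neg, norm_neg] at this
    exact abs_le.2 ⟨by linarith, (hgp h).trans (hp_le h)⟩
  refine ⟨g.mkContinuous K hg_bound, hgp, ?_⟩
  rw [LinearMap.mkContinuous_apply, hgf ⟨v, Submodule.mem_span_singleton_self v⟩]
  exact LinearPMap.mkSpanSingleton'_apply_self v a hker _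

end HahnBanach

section ClarkeDeriv

variable {X : Type*} [NormedAddCommGroup X] [NormedSpace ℝ X]

noncomputable def clarkeQuotient (φ : X → ℝ) (h : X) (p : X × ℝ) : ℝ :=
  (φ (p.1 + p.2 • h) - φ p.1) / p.2

lemma clarkeDeriv_eq_limsup (φ : X → ℝ) (z h : X) :
    clarkeDeriv φ z h = limsup (clarkeQuotient φ h) (clarkeFilter z) := rfl

lemma tendsto_add_smul_clarkeFilter (z h : X) :
    Tendsto (fun p : X × ℝ => p.1 + p.2 • h) (clarkeFilter z) (𝓝 z) := by
  have hcont : Continuous fun p : X × ℝ => p.1 + p.2 • h :=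
    continuous_fst.add (continuous_snd.smul continuous_const)
  simpa using (hcont.tendsto (z, 0)).mono_left (clarkeFilter_le_nhds z)

lemma eventually_abs_clarkeQuotient_le {φ : X → ℝ} {z : X} {K : ℝ≥0} {U : Set X}
    (hK : LipschitzOnWith K φ U) (hU : U ∈ 𝓝 z) (h : X) :
    ∀ᶠ p in clarkeFilter z, |clarkeQuotient φ h p| ≤ K * ‖h‖ := by
  filter_upwards [tendsto_fst.eventually hU, (tendsto_add_smul_clarkeFilter z h).eventually hU,
    eventually_pos_snd_clarkeFilter z] with p hp₁ hp₂ hpos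
  have hlip := hK.dist_le_mul _ hp₂ _ hp₁
  rw [Real.dist_eq, dist_eq_norm, add_sub_cancel_left, norm_smul, Real.norm_of_nonneg hpos.le]
    at hlip
  rw [clarkeQuotient, abs_div, abs_of_pos hpos, div_le_iff₀ hpos]
  linarith

variable {φ : X → ℝ} {z : X} {K : ℝ≥0} {U : Set X}

lemma clarkeDeriv_le_of_eventually_le (hK : LipschitzOnWith K φ U) (hU : U ∈ 𝓝 z) {h : X}
    {b : ℝ} (hb : ∀ᶠ p in clarkeFilter z, clarkeQuotient φ h p ≤ b) :
    clarkeDeriv φ z h ≤ b := by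
  have hbdd := eventually_abs_clarkeQuotient_le hK hU h
  rw [clarkeDeriv_eq_limsup]
  exact limsup_le_of_le
    (isBoundedUnder_of_eventually_ge (hbdd.mono fun _ hp => (abs_le.1 hp).1)).isCoboundedUnder_le hb

lemma eventually_clarkeQuotient_lt (hK : LipschitzOnWith K φ U) (hU : U ∈ 𝓝 z) {h : X}
    {b : ℝ} (hb : clarkeDeriv φ z h < b) : ∀ᶠ p in clarkeFilter z, clarkeQuotient φ h p < b := by
  have hbdd := eventually_abs_clarkeQuotient_le hK hU h
  rw [clarkeDeriv_eq_limsup] at hb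
  exact eventually_lt_of_limsup_lt hb
    (isBoundedUnder_of_eventually_le (hbdd.mono fun _ hp => (abs_le.1 hp).2))

lemma le_clarkeDeriv_of_tendsto (hK : LipschitzOnWith K φ U) (hU : U ∈ 𝓝 z) {h : X}
    {α : Type*} {m : Filter α} [m.NeBot] {G : α → X × ℝ} (hG : Tendsto G m (clarkeFilter z))
    {a : ℝ} (ha : ∀ᶠ i in m, a ≤ clarkeQuotient φ h (G i)) : a ≤ clarkeDeriv φ z h := by
  by_contra! hlt
  obtain ⟨i, hai, hi⟩ := (ha.and (hG.eventually (eventually_clarkeQuotient_lt hK hU hlt))).exists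
  exact hai.not_gt hi

lemma clarkeDeriv_le_mul_norm (hK : LipschitzOnWith K φ U) (hU : U ∈ 𝓝 z) (h : X) :
    clarkeDeriv φ z h ≤ K * ‖h‖ :=
  clarkeDeriv_le_of_eventually_le hK hU
    ((eventually_abs_clarkeQuotient_le hK hU h).mono fun _ hp => (abs_le.1 hp).2)

lemma clarkeQuotient_add (φ : X → ℝ) (h₁ h₂ : X) (p : X × ℝ) :
    clarkeQuotient φ (h₁ + h₂) p =
      clarkeQuotient φ h₁ (p.1 + p.2 • h₂, p.2) + clarkeQuotient φ h₂ p := by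
  simp only [clarkeQuotient, smul_add, ← add_div]
  rw [add_comm (p.2 • h₁), ← add_assoc]
  ring

lemma tendsto_add_smul_prod_clarkeFilter (z h : X) :
    Tendsto (fun p : X × ℝ => (p.1 + p.2 • h, p.2)) (clarkeFilter z) (clarkeFilter z) :=
  (tendsto_add_smul_clarkeFilter z h).prodMk tendsto_snd

lemma clarkeDeriv_add_le (hK : LipschitzOnWith K φ U) (hU : U ∈ 𝓝 z) (h₁ h₂ : X) :
    clarkeDeriv φ z (h₁ + h₂) ≤ clarkeDeriv φ z h₁ + clarkeDeriv φ z h₂ := by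
  refine le_of_forall_pos_le_add fun ε hε => clarkeDeriv_le_of_eventually_le hK hU ?_
  filter_upwards [(tendsto_add_smul_prod_clarkeFilter z h₂).eventually
      (eventually_clarkeQuotient_lt hK hU (lt_add_of_pos_right (clarkeDeriv φ z h₁) (half_pos hε))),
    eventually_clarkeQuotient_lt hK hU (lt_add_of_pos_right (clarkeDeriv φ z h₂) (half_pos hε))]
    with p hp₁ hp₂
  rw [clarkeQuotient_add]
  linarith

lemma clarkeQuotient_smul (φ : X → ℝ) {c : ℝ} (hc : c ≠ 0) (h : X) (p : X × ℝ) :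
    clarkeQuotient φ (c • h) p = c * clarkeQuotient φ h (p.1, c * p.2) := by
  simp only [clarkeQuotient, smul_smul, mul_comm p.2 c]
  rw [mul_div_assoc', mul_div_mul_left _ _ hc]

lemma clarkeDeriv_smul_le (hK : LipschitzOnWith K φ U) (hU : U ∈ 𝓝 z) {c : ℝ} (hc : 0 < c)
    (h : X) : clarkeDeriv φ z (c • h) ≤ c * clarkeDeriv φ z h := by
  refine le_of_forall_gt_imp_ge_of_dense fun b hb => clarkeDeriv_le_of_eventually_le hK hU ?_
  filter_upwards [(tendsto_mul_snd_clarkeFilter z hc).eventually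
    (eventually_clarkeQuotient_lt hK hU ((lt_div_iff₀' hc).2 hb))] with p hp
  rw [clarkeQuotient_smul φ hc.ne']
  exact ((lt_div_iff₀' hc).1 hp).le

lemma clarkeDeriv_smul (hK : LipschitzOnWith K φ U) (hU : U ∈ 𝓝 z) {c : ℝ} (hc : 0 < c)
    (h : X) : clarkeDeriv φ z (c • h) = c * clarkeDeriv φ z h := by
  refine (clarkeDeriv_smul_le hK hU hc h).antisymm ?_
  have := clarkeDeriv_smul_le hK hU (inv_pos.2 hc) (c • h)
  rw [inv_smul_smul₀ hc.ne'] at this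
  rwa [← le_inv_mul_iff₀ hc]

lemma mul_le_clarkeDeriv_of_isLocalExtr {x v : X} {t₀ d : ℝ}
    (hK : LipschitzOnWith K φ U) (hU : U ∈ 𝓝 (x + t₀ • v))
    (hext : IsLocalExtr (fun t => φ (x + t • v) - t * d) t₀) (s : ℝ) :
    s * d ≤ clarkeDeriv φ (x + t₀ • v) (s • v) := by
  have hline : ∀ t u : ℝ, x + t • v + u • s • v = x + (t + u * s) • v := fun t u => by
    rw [smul_smul, add_assoc, ← add_smul]
  have htendsto : ∀ σ : ℝ, Tendsto (fun u : ℝ => t₀ + u * σ) (𝓝[>] 0) (𝓝 t₀) := fun σ =>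
    ((continuous_const.add (continuous_id.mul continuous_const)).tendsto' 0 t₀ (by simp)).mono_left
      nhdsWithin_le_nhds
  rcases hext with hmin | hmax
  · refine le_clarkeDeriv_of_tendsto hK hU (G := fun u => (x + t₀ • v, u))
      (tendsto_const_nhds.prodMk tendsto_id) ?_
    filter_upwards [(htendsto s).eventually hmin, self_mem_nhdsWithin] with u hu hpos
    rw [clarkeQuotient, le_div_iff₀ hpos, hline]
    linarith
  · -- At a maximum the base point moves instead: from `x + (t₀ - u * s) • v`,
    -- the step `u • s • v` lands on `x + t₀ • v`.
    have hbase : Tendsto (fun u : ℝ => x + (t₀ + u * -s) • v) (𝓝[>] 0) (𝓝 (x + t₀ • v)) :=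
      tendsto_const_nhds.add ((htendsto (-s)).smul_const v)
    refine le_clarkeDeriv_of_tendsto hK hU (G := fun u => (x + (t₀ + u * -s) • v, u))
      (hbase.prodMk tendsto_id) ?_
    filter_upwards [(htendsto (-s)).eventually hmax, self_mem_nhdsWithin] with u hu hpos
    rw [clarkeQuotient, le_div_iff₀ hpos, hline, show t₀ + u * -s + u * s = t₀ by ring]
    linarith

end ClarkeDeriv

theorem lebourg_mean_value_general {X : Type*} [NormedAddCommGroup X] [NormedSpace ℝ X]
    (φ : X → ℝ) (hφ : LocallyLipschitz φ) (x y : X) :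
    ∃ t ∈ Set.Ioo (0 : ℝ) 1, ∃ xs ∈ clarkeSubdiff φ (x + t • (y - x)),
      φ y - φ x = xs (y - x) := by
  have hcont : Continuous fun t : ℝ => φ (x + t • (y - x)) - t * (φ y - φ x) :=
    (hφ.continuous.comp (by fun_prop)).sub (by fun_prop)
  obtain ⟨t₀, ht₀, hext⟩ := exists_isLocalExtr_Ioo zero_lt_one hcont.continuousOn (by simp)
  obtain ⟨K, U, hU, hK⟩ := hφ (x + t₀ • (y - x))
  have hslope := mul_le_clarkeDeriv_of_isLocalExtr hK hU hext
  obtain ⟨xs, hxs, hxs_v⟩ := exists_continuousLinearMap_le_sublinear_apply_eq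
    (fun _ hc => clarkeDeriv_smul hK hU hc) (clarkeDeriv_add_le hK hU)
    (clarkeDeriv_le_mul_norm hK hU) (by simpa only [one_mul, one_smul] using hslope 1)
    (by simpa only [neg_one_mul, neg_one_smul] using hslope (-1))
  exact ⟨t₀, ht₀, xs, hxs, hxs_v.symm⟩

/-- Lebourg's mean value theorem: for a locally Lipschitz `φ` on a Banach space
and any `x, y` there exist `t ∈ (0,1)` and `x* ∈ ∂φ(x + t(y−x))` with
`φ(y) − φ(x) = ⟨x*, y − x⟩`. -/
theorem lebourg_mean_value {X : Type*} [NormedAddCommGroup X] [NormedSpace ℝ X]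
    [CompleteSpace X] (φ : X → ℝ) (hφ : LocallyLipschitz φ) (x y : X) :
    ∃ t ∈ Set.Ioo (0 : ℝ) 1, ∃ xs ∈ clarkeSubdiff φ (x + t • (y - x)),
      φ y - φ x = xs (y - x) :=
  lebourg_mean_value_general φ hφ x y
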